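/- Let λ be a measure on a measurable space X with 0 < λ(X) < ∞, let S ⊆ X × X be measurable, let g : X → ℝ be measurable and λ-integrable, set f x := ∫_{S_x} g dλ, and let Φ : ℝ → ℝ be continuous, nondecreasing on [0,∞), convex on [0,∞), with Φ(0) = 0. Let w₀ : X → ℝ be measurable with (λ(Sʸ)).toReal ≤ w₀(y) for every y ∈ X. If t > 0 satisfies ∫⁻_X ENNReal.ofReal (w₀ y * Φ (|g y| / t)) dλ(y) ≤ λ X, then ∫⁻_X ENNReal.ofReal (Φ (|f x| / ((λ X).toReal * t))) dλ(x) ≤ 1. -/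

import Mathlib

/-!
Since `|f x| ≤ ∫_{S_x} |g|`, monotonicity of `Φ` and Jensen's inequality for the average over `X`
give `Φ (|f x| / (λ(X) t)) ≤ λ(X)⁻¹ ∫_{S_x} Φ (|g| / t) dλ`; here `Φ 0 = 0` lets the integral over
the section be read as an integral over `X` of an indicator. Integrating in `x` and exchanging the
order of integration turns the right-hand side into `λ(X)⁻¹ ∫ λ(Sʸ) Φ (|g y| / t) dλ(y)`, which the
weight condition bounds by `λ(X)⁻¹ ∫ w₀ Φ (|g| / t) dλ ≤ 1`.
-/

open MeasureTheory ENNReal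

/-- Weighted Luxemburg functional: the infimum in `ℝ≥0∞` of `ENNReal.ofReal t` over all
real `t > 0` such that `∫⁻ x, ENNReal.ofReal (w x * Φ (|f x| / t)) ∂lam ≤ 1`
(the infimum of the empty family is `∞`). -/
noncomputable def luxW {X : Type*} [MeasurableSpace X] (lam : Measure X)
    (Φ : ℝ → ℝ) (w : X → ℝ) (f : X → ℝ) : ℝ≥0∞ :=
  sInf {r : ℝ≥0∞ | ∃ t : ℝ, 0 < t ∧
    (∫⁻ x, ENNReal.ofReal (w x * Φ (|f x| / t)) ∂lam) ≤ 1 ∧ r = ENNReal.ofReal t}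

open Set

theorem lintegral_setLIntegral_section_eq_lintegral_measure_mul {X Y : Type*}
    [MeasurableSpace X] [MeasurableSpace Y] (μ : Measure X) (ν : Measure Y) [SFinite μ] [SFinite ν]
    {S : Set (X × Y)} (hS : MeasurableSet S) {c : Y → ℝ≥0∞} (hc : AEMeasurable c ν) :
    ∫⁻ x, ∫⁻ y in {y | (x, y) ∈ S}, c y ∂ν ∂μ = ∫⁻ y, μ {x | (x, y) ∈ S} * c y ∂ν := by
  have hF : AEMeasurable (S.indicator fun p => c p.2) (μ.prod ν) := hc.comp_snd.indicator hS
  calc ∫⁻ x, ∫⁻ y in {y | (x, y) ∈ S}, c y ∂ν ∂μ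
      = ∫⁻ x, ∫⁻ y, S.indicator (fun p => c p.2) (x, y) ∂ν ∂μ :=
        lintegral_congr fun x => (lintegral_indicator (measurable_prodMk_left hS) c).symm
    _ = ∫⁻ y, ∫⁻ x, S.indicator (fun p => c p.2) (x, y) ∂μ ∂ν := by
        rw [← lintegral_prod _ hF, lintegral_prod_symm _ hF]
    _ = ∫⁻ y, μ {x | (x, y) ∈ S} * c y ∂ν := by
        refine lintegral_congr fun y => ?_
        rw [mul_comm, ← setLIntegral_const]
        exact lintegral_indicator (measurable_prodMk_right hS) fun _ => c y

theorem ConvexOn.ofReal_map_average_le {X : Type*} [MeasurableSpace X] {μ : Measure X}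
    [IsFiniteMeasure μ] [NeZero μ] {Φ : ℝ → ℝ} (hΦconv : ConvexOn ℝ (Ici 0) Φ)
    (hΦc : Continuous Φ) (hΦnn : ∀ r, 0 ≤ r → 0 ≤ Φ r) {k : X → ℝ}
    (hk : Integrable k μ) (hknn : ∀ y, 0 ≤ k y) :
    ENNReal.ofReal (Φ (⨍ y, k y ∂μ)) ≤ (μ univ)⁻¹ * ∫⁻ y, ENNReal.ofReal (Φ (k y)) ∂μ := by
  by_cases hinf : ∫⁻ y, ENNReal.ofReal (Φ (k y)) ∂μ = ∞
  · simp [hinf, ENNReal.mul_top, measure_ne_top]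
  have hΦk : Integrable (fun y => Φ (k y)) μ := by
    refine ⟨hΦc.comp_aestronglyMeasurable hk.1, ?_⟩
    rw [hasFiniteIntegral_iff_ofReal (.of_forall fun y => hΦnn _ (hknn y))]
    exact lt_top_iff_ne_top.2 hinf
  calc ENNReal.ofReal (Φ (⨍ y, k y ∂μ))
      ≤ ENNReal.ofReal (⨍ y, Φ (k y) ∂μ) := ENNReal.ofReal_le_ofReal <|
        hΦconv.map_average_le hΦc.continuousOn isClosed_Ici (.of_forall hknn) hk hΦk
    _ = (μ univ)⁻¹ * ∫⁻ y, ENNReal.ofReal (Φ (k y)) ∂μ := by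
        have hμ : (μ univ)⁻¹ ≠ ∞ := inv_ne_top.2 (NeZero.ne μ ∘ Measure.measure_univ_eq_zero.1)
        rw [average_eq', ofReal_integral_eq_lintegral_ofReal (hΦk.smul_measure hμ)
          (.of_forall fun y => hΦnn _ (hknn y)), lintegral_smul_measure, smul_eq_mul]

theorem ofReal_map_abs_setIntegral_div_le {X : Type*} [MeasurableSpace X] {μ : Measure X}
    [IsFiniteMeasure μ] [NeZero μ] {Φ : ℝ → ℝ} (hΦconv : ConvexOn ℝ (Ici 0) Φ)
    (hΦc : Continuous Φ) (hΦmono : MonotoneOn Φ (Ici 0)) (hΦ0 : Φ 0 = 0) {h : X → ℝ}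
    (hh : Integrable h μ) {A : Set X} (hA : MeasurableSet A) :
    ENNReal.ofReal (Φ (|∫ y in A, h y ∂μ| / μ.real univ))
      ≤ (μ univ)⁻¹ * ∫⁻ y in A, ENNReal.ofReal (Φ |h y|) ∂μ := by
  set k := A.indicator fun y => |h y|
  have hknn : ∀ y, 0 ≤ k y := fun y => indicator_nonneg (fun y _ => abs_nonneg (h y)) y
  have hnn : 0 ≤ |∫ y in A, h y ∂μ| / μ.real univ := by positivity
  have hle : |∫ y in A, h y ∂μ| / μ.real univ ≤ ⨍ y, k y ∂μ := by
    rw [average_eq, smul_eq_mul, integral_indicator hA, inv_mul_eq_div]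
    gcongr
    exact abs_integral_le_integral_abs
  have hΦk : ∀ y, ENNReal.ofReal (Φ (k y)) = A.indicator (fun y => ENNReal.ofReal (Φ |h y|)) y :=
    fun y => by by_cases hy : y ∈ A <;> simp [k, hy, hΦ0]
  calc ENNReal.ofReal (Φ (|∫ y in A, h y ∂μ| / μ.real univ))
      ≤ ENNReal.ofReal (Φ (⨍ y, k y ∂μ)) :=
        ENNReal.ofReal_le_ofReal <| hΦmono hnn (hnn.trans hle) hle
    _ ≤ (μ univ)⁻¹ * ∫⁻ y, ENNReal.ofReal (Φ (k y)) ∂μ :=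
        hΦconv.ofReal_map_average_le hΦc (fun r hr => hΦ0 ▸ hΦmono self_mem_Ici hr hr)
          (hh.abs.indicator hA) hknn
    _ = (μ univ)⁻¹ * ∫⁻ y in A, ENNReal.ofReal (Φ |h y|) ∂μ := by
        simp_rw [hΦk, lintegral_indicator hA]

theorem stmt_3_general {X : Type*} [MeasurableSpace X] (lam : Measure X)
    (hpos : 0 < lam Set.univ) (hfin : lam Set.univ < ⊤)
    (S : Set (X × X)) (hS : MeasurableSet S)
    (g : X → ℝ) (hgint : Integrable g lam)
    (f : X → ℝ) (hf : ∀ x, f x = ∫ y in {y | (x, y) ∈ S}, g y ∂lam)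
    (Φ : ℝ → ℝ) (hΦc : Continuous Φ) (hΦmono : MonotoneOn Φ (Set.Ici 0))
    (hΦconv : ConvexOn ℝ (Set.Ici 0) Φ) (hΦ0 : Φ 0 = 0)
    (w₀ : X → ℝ)
    (hw₀ : ∀ y, (lam {x | (x, y) ∈ S}).toReal ≤ w₀ y)
    (t : ℝ) (ht : 0 < t)
    (hle : (∫⁻ y, ENNReal.ofReal (w₀ y * Φ (|g y| / t)) ∂lam) ≤ lam Set.univ) :
    (∫⁻ x, ENNReal.ofReal (Φ (|f x| / ((lam Set.univ).toReal * t))) ∂lam) ≤ 1 := by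
  have : IsFiniteMeasure lam := ⟨hfin⟩
  have : NeZero lam := ⟨Measure.measure_univ_pos.1 hpos⟩
  set c : X → ℝ≥0∞ := fun y => ENNReal.ofReal (Φ (|g y| / t))
  have hc : AEMeasurable c lam :=
    (hΦc.measurable.comp_aemeasurable (hgint.1.aemeasurable.abs.div_const t)).ennreal_ofReal
  have hsection : ∀ x, ENNReal.ofReal (Φ (|f x| / ((lam univ).toReal * t)))
      ≤ (lam univ)⁻¹ * ∫⁻ y in {y | (x, y) ∈ S}, c y ∂lam := by
    intro x
    have hfx : |f x| / ((lam univ).toReal * t)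
        = |∫ y in {y | (x, y) ∈ S}, g y / t ∂lam| / lam.real univ := by
      rw [integral_div, abs_div, abs_of_pos ht, ← hf, div_div, mul_comm, measureReal_def]
    simpa only [hfx, c, abs_div, abs_of_pos ht] using
      ofReal_map_abs_setIntegral_div_le hΦconv hΦc hΦmono hΦ0 (hgint.div_const t)
        (A := {y | (x, y) ∈ S}) (measurable_prodMk_left hS)
  have hweight : ∀ y, lam {x | (x, y) ∈ S} * c y ≤ ENNReal.ofReal (w₀ y * Φ (|g y| / t)) := by
    intro y
    have hw₀_nn : 0 ≤ w₀ y := toReal_nonneg.trans (hw₀ y)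
    rw [ENNReal.ofReal_mul hw₀_nn]
    gcongr
    exact (ENNReal.le_ofReal_iff_toReal_le (measure_ne_top _ _) hw₀_nn).2 (hw₀ y)
  calc ∫⁻ x, ENNReal.ofReal (Φ (|f x| / ((lam univ).toReal * t))) ∂lam
      ≤ ∫⁻ x, (lam univ)⁻¹ * ∫⁻ y in {y | (x, y) ∈ S}, c y ∂lam ∂lam := lintegral_mono hsection
    _ = (lam univ)⁻¹ * ∫⁻ y, lam {x | (x, y) ∈ S} * c y ∂lam := by
        rw [lintegral_const_mul' _ _ (inv_ne_top.2 (NeZero.ne _)),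
          lintegral_setLIntegral_section_eq_lintegral_measure_mul lam lam hS hc]
    _ ≤ (lam univ)⁻¹ * lam univ := by
        gcongr
        exact (lintegral_mono hweight).trans hle
    _ = 1 := ENNReal.inv_mul_cancel (NeZero.ne _) (measure_ne_top _ _)

theorem stmt_3 {X : Type*} [MeasurableSpace X] (lam : Measure X)
    (hpos : 0 < lam Set.univ) (hfin : lam Set.univ < ⊤)
    (S : Set (X × X)) (hS : MeasurableSet S)
    (g : X → ℝ) (hgmeas : Measurable g) (hgint : Integrable g lam)
    (f : X → ℝ) (hf : ∀ x, f x = ∫ y in {y | (x, y) ∈ S}, g y ∂lam)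
    (Φ : ℝ → ℝ) (hΦc : Continuous Φ) (hΦmono : MonotoneOn Φ (Set.Ici 0))
    (hΦconv : ConvexOn ℝ (Set.Ici 0) Φ) (hΦ0 : Φ 0 = 0)
    (w₀ : X → ℝ) (hw₀meas : Measurable w₀)
    (hw₀ : ∀ y, (lam {x | (x, y) ∈ S}).toReal ≤ w₀ y)
    (t : ℝ) (ht : 0 < t)
    (hle : (∫⁻ y, ENNReal.ofReal (w₀ y * Φ (|g y| / t)) ∂lam) ≤ lam Set.univ) :
    (∫⁻ x, ENNReal.ofReal (Φ (|f x| / ((lam Set.univ).toReal * t))) ∂lam) ≤ 1 :=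
  stmt_3_general lam hpos hfin S hS g hgint f hf Φ hΦc hΦmono hΦconv hΦ0 w₀ hw₀ t ht hle
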